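/- arXiv:1909.01667 — 2 statements merged into one kernel-verified Lean document; each statement's English description precedes it below -/
import Mathlib

section
/- For each d ≥ 1, there is a map R from ordinals below ω^(ω^(d−1)) to finite subsets of ℕ^d such that R(γ) ⊑ᵐᵃʲ R(ζ) implies γ ≤ ζ. Concretely, writing γ in Cantor normal form as ω^β₁ + … + ω^β_l with β₁ ≥ … ≥ β_l and each βᵢ = ω^(d−2)·c_{i,d−2} + … + ω⁰·c_{i,0}, define R(γ) = {(i, c_{i,0}, …, c_{i,d−2}) : 1 ≤ i ≤ l}; then R(γ) ⊑ᵐᵃʲ R(ζ) → γ ≤ ζ. -/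
open Ordinal

/-- The majoring relation on finite subsets of `ℕ^d`. -/
def MajF {d : ℕ} (X Y : Finset (Fin d → ℕ)) : Prop :=
  ∀ x ∈ X, ∃ y ∈ Y, x ≤ y

universe u

open Ordinal

namespace Stmt11Aux

noncomputable def wsum : ℕ → (ℕ → ℕ) → Ordinal.{u}
  | 0, _ => 0
  | e + 1, c => omega0 ^ (e : Ordinal) * (c e : Ordinal) + wsum e c

lemma wsum_mono (e : ℕ) {c c' : ℕ → ℕ} (h : ∀ m < e, c m ≤ c' m) :
    wsum e c ≤ wsum e c' := by
  induction e with
  | zero => simp [wsum]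
  | succ e ih =>
      refine add_le_add ?_ (ih fun m hm => h m (by omega))
      exact mul_le_mul_right (Nat.cast_le.2 (h e (by omega))) _

lemma wsum_exists : ∀ (e : ℕ) (β : Ordinal), β < omega0 ^ (e : Ordinal) →
    ∃ c : ℕ → ℕ, wsum e c = β := by
  intro e
  induction e with
  | zero => intro β hβ; simp at hβ; exact ⟨fun _ => 0, by simp [wsum, hβ.symm]⟩
  | succ e ih =>
      intro β hβ
      have hpow : omega0 ^ (e : Ordinal) ≠ 0 := (opow_pos _ omega0_pos).ne'
      have hcast : ((e+1 : ℕ) : Ordinal) = (e : Ordinal) + 1 := Nat.cast_succ e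
      have hq : β / omega0 ^ (e : Ordinal) < omega0 := by
        rw [Ordinal.div_lt hpow]
        calc β < omega0 ^ ((e+1 : ℕ) : Ordinal) := hβ
          _ = omega0 ^ (e : Ordinal) * omega0 := by rw [hcast, opow_add, opow_one]
      obtain ⟨n, hn⟩ := Ordinal.lt_omega0.1 hq
      have hr : β % omega0 ^ (e : Ordinal) < omega0 ^ (e : Ordinal) :=
        Ordinal.mod_lt _ hpow
      obtain ⟨c, hc⟩ := ih _ hr
      refine ⟨fun m => if m = e then n else c m, ?_⟩
      have hcongr : ∀ (k : ℕ), k ≤ e → wsum k (fun m => if m = e then n else c m) = wsum k c := by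
        intro k
        induction k with
        | zero => intro _; rfl
        | succ k ihk =>
            intro hk
            simp only [wsum]
            rw [ihk (by omega), if_neg (by omega)]
      have : wsum (e+1) (fun m => if m = e then n else c m)
          = omega0 ^ (e : Ordinal) * (n : Ordinal) + β % omega0 ^ (e : Ordinal) := by
        simp only [wsum]
        rw [hcongr e le_rfl, hc]
        norm_num
      rw [this, ← hn]
      exact Ordinal.div_add_mod _ _

noncomputable def evalL (e : ℕ) (L : List (ℕ → ℕ)) : Ordinal :=
  L.foldr (fun c s => omega0 ^ wsum e c + s) 0

lemma foldr_replicate (n : ℕ) (β s : Ordinal) :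
    (List.replicate n β).foldr (fun b t => omega0 ^ b + t) s = omega0 ^ β * n + s := by
  induction n with
  | zero => simp
  | succ n ih =>
      rw [List.replicate_succ, List.foldr_cons, ih, show ((n+1 : ℕ) : Ordinal) = 1 + (n : Ordinal)
        by rw [Nat.add_comm]; push_cast; rfl, mul_add, mul_one, add_assoc]

lemma pw_rep_app (n : ℕ) (β : Ordinal) (L' : List Ordinal)
    (h1 : ∀ b ∈ L', b ≤ β) (h2 : L'.Pairwise (fun a b => b ≤ a)) :
    (List.replicate n β ++ L').Pairwise (fun a b => b ≤ a) := by
  induction n with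
  | zero => simpa
  | succ n ih =>
      rw [List.replicate_succ, List.cons_append, List.pairwise_cons]
      refine ⟨fun b hb => ?_, ih⟩
      rcases List.mem_append.1 hb with hb | hb
      · rw [List.eq_of_mem_replicate hb]
      · exact h1 b hb

lemma exp_list (δ : Ordinal) : ∀ γ, γ < omega0 ^ δ →
    ∃ L : List Ordinal, L.Pairwise (fun a b => b ≤ a) ∧ (∀ b ∈ L, b < δ) ∧
      (∀ b ∈ L, b ≤ log omega0 γ) ∧
      L.foldr (fun b s => omega0 ^ b + s) 0 = γ := by
  intro γ
  induction γ using Ordinal.induction with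
  | h γ IH =>
    intro hγ
    rcases eq_or_ne γ 0 with rfl | hγ0
    · exact ⟨[], by simp⟩
    · set β := log omega0 γ with hβ
      have hpow : omega0 ^ β ≠ 0 := (opow_pos _ omega0_pos).ne'
      have hωβ : omega0 ^ β ≤ γ := opow_log_le_self _ hγ0
      have hq : γ / omega0 ^ β < omega0 := by
        rw [Ordinal.div_lt hpow]
        calc γ < omega0 ^ (Order.succ β) := lt_opow_succ_log_self one_lt_omega0 γ
          _ = omega0 ^ β * omega0 := by rw [opow_succ]
      obtain ⟨n, hn⟩ := Ordinal.lt_omega0.1 hq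
      set r := γ % omega0 ^ β with hr'
      have hr : r < omega0 ^ β := Ordinal.mod_lt _ hpow
      have hrγ : r < γ := lt_of_lt_of_le hr hωβ
      have hsum : omega0 ^ β * (n : Ordinal) + r = γ := by
        rw [← hn]; exact Ordinal.div_add_mod _ _
      obtain ⟨L', hpw, hδ, hlog, heval⟩ := IH r hrγ (lt_of_le_of_lt hrγ.le hγ)
      have hlog' : log omega0 r ≤ β := log_mono_right _ hrγ.le
      have hβδ : β < δ := (lt_opow_iff_log_lt one_lt_omega0 hγ0).1 hγ
      refine ⟨List.replicate n β ++ L', ?_, ?_, ?_, ?_⟩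
      · exact pw_rep_app n β L' (fun b hb => (hlog b hb).trans hlog') hpw
      · intro b hb
        rcases List.mem_append.1 hb with hb | hb
        · rw [List.eq_of_mem_replicate hb]; exact hβδ
        · exact lt_of_le_of_lt ((hlog b hb).trans hlog') hβδ
      · intro b hb
        rcases List.mem_append.1 hb with hb | hb
        · rw [List.eq_of_mem_replicate hb]
        · exact (hlog b hb).trans hlog'
      · rw [List.foldr_append, heval, foldr_replicate]
        exact hsum

lemma evalL_eq_map (e : ℕ) (Lc : List (ℕ → ℕ)) :
    evalL e Lc = (Lc.map (wsum e)).foldr (fun b s => omega0 ^ b + s) 0 := by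
  induction Lc with
  | nil => rfl
  | cons c L ih => simp only [evalL, List.map_cons, List.foldr_cons] at *; rw [ih]

lemma main_ex (e : ℕ) (γ : Ordinal.{u}) (hγ : γ < omega0 ^ omega0 ^ (e : Ordinal)) :
    ∃ L : List (ℕ → ℕ), L.Pairwise (fun a b => wsum.{u} e b ≤ wsum.{u} e a) ∧ evalL.{u} e L = γ := by
  obtain ⟨L, hpw, hδ, -, heval⟩ := exp_list (omega0 ^ (e : Ordinal)) γ hγ
  have hex : ∀ (L : List Ordinal), (∀ b ∈ L, b < omega0 ^ (e : Ordinal)) →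
      ∃ Lc : List (ℕ → ℕ), Lc.map (wsum e) = L := by
    intro L
    induction L with
    | nil => exact fun _ => ⟨[], rfl⟩
    | cons b L ih =>
        intro h
        obtain ⟨Lc, hLc⟩ := ih fun x hx => h x (List.mem_cons_of_mem _ hx)
        obtain ⟨c, hc⟩ := wsum_exists e b (h b List.mem_cons_self)
        exact ⟨c :: Lc, by simp [hLc, hc]⟩
  obtain ⟨Lc, hLc⟩ := hex L hδ
  refine ⟨Lc, ?_, ?_⟩
  · rw [← hLc, List.pairwise_map] at hpw
    exact hpw.imp fun h => h
  · rw [evalL_eq_map, hLc, heval]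

lemma foldr_le : ∀ (A B : List Ordinal), A.length ≤ B.length →
    (∀ i, i < A.length → A.getD i 0 ≤ B.getD i 0) →
    A.foldr (fun b s => omega0 ^ b + s) 0 ≤ B.foldr (fun b s => omega0 ^ b + s) 0 := by
  intro A
  induction A with
  | nil => intro B _ _; exact zero_le
  | cons a A ih =>
      intro B hlen h
      cases B with
      | nil => simp at hlen
      | cons b B =>
          simp only [List.foldr]
          refine add_le_add ?_ (ih B (by simpa using hlen) fun i hi => h (i+1) (by simpa using hi))
          exact opow_le_opow_right omega0_pos (by simpa using h 0 (by simp))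


def tup (d : ℕ) (i : ℕ) (c : ℕ → ℕ) : Fin d → ℕ :=
  fun k => if (k : ℕ) = 0 then i else c ((k : ℕ) - 1)

lemma tup_le {d : ℕ} (hd : 1 ≤ d) {i j : ℕ} {c c' : ℕ → ℕ}
    (h : tup d i c ≤ tup d j c') : i ≤ j ∧ ∀ m, m < d - 1 → c m ≤ c' m := by
  constructor
  · have := h ⟨0, hd⟩
    simpa [tup] using this
  · intro m hm
    have := h ⟨m + 1, by omega⟩
    simpa [tup] using this

noncomputable def RSet (d : ℕ) (L : List (ℕ → ℕ)) : Finset (Fin d → ℕ) :=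
  ((List.range L.length).map (fun i => tup d i (L.getD i (fun _ => 0)))).toFinset

lemma mem_RSet {d : ℕ} {L : List (ℕ → ℕ)} {x : Fin d → ℕ} :
    x ∈ RSet d L ↔ ∃ i, i < L.length ∧ tup d i (L.getD i (fun _ => 0)) = x := by
  simp [RSet, List.mem_toFinset, List.mem_map, List.mem_range]

end Stmt11Aux


open Stmt11Aux in
lemma stmt11_reflect {d : ℕ} (hd : 1 ≤ d) {γ ζ : Ordinal.{u}}
    {A B : List (ℕ → ℕ)}
    (hpwB : B.Pairwise (fun a b => wsum.{u} (d-1) b ≤ wsum.{u} (d-1) a))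
    (hevA : evalL.{u} (d-1) A = γ) (hevB : evalL.{u} (d-1) B = ζ)
    (hmaj : MajF (RSet d A) (RSet d B)) : γ ≤ ζ := by
  set e := d - 1 with he
  set z : ℕ → ℕ := fun _ => 0 with hz
  have key : ∀ i, i < A.length → i < B.length ∧
      wsum.{u} e (A.getD i z) ≤ wsum.{u} e (B.getD i z) := by
    intro i hi
    have hx : tup d i (A.getD i z) ∈ RSet d A := mem_RSet.2 ⟨i, hi, rfl⟩
    obtain ⟨y, hy, hxy⟩ := hmaj _ hx
    obtain ⟨j, hj, rfl⟩ := mem_RSet.1 hy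
    obtain ⟨hij, hcoord⟩ := tup_le hd hxy
    have hiB : i < B.length := lt_of_le_of_lt hij hj
    refine ⟨hiB, ?_⟩
    have h1 : wsum.{u} e (A.getD i z) ≤ wsum.{u} e (B.getD j z) :=
      wsum_mono e fun m hm => hcoord m (by omega)
    have h2 : wsum.{u} e (B.getD j z) ≤ wsum.{u} e (B.getD i z) := by
      rcases eq_or_lt_of_le hij with rfl | hij'
      · exact le_rfl
      · have := List.pairwise_iff_getElem.1 hpwB i j hiB hj hij'
        rwa [List.getD_eq_getElem _ _ hj, List.getD_eq_getElem _ _ hiB]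
    exact h1.trans h2
  have hlen : A.length ≤ B.length := by
    rcases Nat.eq_zero_or_pos A.length with h0 | h0
    · omega
    · have := (key (A.length - 1) (by omega)).1
      omega
  have hle : evalL.{u} e A ≤ evalL.{u} e B := by
    rw [evalL_eq_map, evalL_eq_map]
    apply foldr_le
    · simpa using hlen
    · intro i hi
      simp only [List.length_map] at hi
      have hiB : i < B.length := lt_of_lt_of_le hi hlen
      rw [List.getD_eq_getElem _ _ (by simpa using hi),
        List.getD_eq_getElem _ _ (by simpa using hiB),
        List.getElem_map, List.getElem_map]
      rw [← List.getD_eq_getElem A z hi, ← List.getD_eq_getElem B z hiB]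
      exact (key i hi).2
  rw [hevA, hevB] at hle
  exact hle

open Stmt11Aux in
/-- For every `d ≥ 1` there is a map `R` from ordinals below `ω^(ω^(d-1))`
to finite subsets of `ℕ^d` which reflects the majoring order into the
ordinal order: `R(γ) ⊑ᵐᵃʲ R(ζ)` implies `γ ≤ ζ`. -/
theorem stmt11 (d : ℕ) (hd : 1 ≤ d) :
    ∃ R : {γ : Ordinal // γ < omega0 ^ omega0 ^ ((d - 1 : ℕ) : Ordinal)} →
        Finset (Fin d → ℕ),
      ∀ γ ζ, MajF (R γ) (R ζ) → γ.1 ≤ ζ.1 := by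
  classical
  refine ⟨fun x => RSet d (main_ex (d - 1) x.1 x.2).choose, ?_⟩
  intro γ ζ hmaj
  obtain ⟨hpwγ, hevγ⟩ := (main_ex (d - 1) γ.1 γ.2).choose_spec
  obtain ⟨hpwζ, hevζ⟩ := (main_ex (d - 1) ζ.1 ζ.2).choose_spec
  exact stmt11_reflect hd hpwζ hevγ hevζ hmaj
end

section
/- Let X be a finite subset of ℕ^d with |x| ≤ n for all x ∈ X (each coordinate bounded by n), let d ≥ 2, and consider the residual (P_f(ℕ^d), ⊑ᵐᵃʲ)/X = {Y finite ⊆ ℕ^d : X ⋢ᵐᵃʲ Y}. Then the map sending Y to the tuple (Yᵢʲ)_{1≤i≤d, 0≤j≤n−1}, where Yᵢʲ = {y with coordinate i deleted : y ∈ Y, yᵢ = j}, is an order reflection into (P_f(ℕ^(d−1)))^(dn) with the product of majoring orders: if the images are componentwise ⊑ᵐᵃʲ-related, the originals are ⊑ᵐᵃʲ-related. -/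
open Classical in
/-- `proj Y i j` collects the elements of `Y` whose `i`-th coordinate equals
`j` and deletes their `i`-th coordinate. -/
noncomputable def proj {e : ℕ} (Y : Finset (Fin (e + 1) → ℕ))
    (i : Fin (e + 1)) (j : ℕ) : Finset (Fin e → ℕ) :=
  (Y.filter fun y => y i = j).image fun y => y ∘ i.succAbove

/-- Let `X ⊆ ℕ^d` (with `d = e+1 ≥ 2`) be finite with all coordinates of its
elements bounded by `n`.  On the residual `{Y : X ⋢ᵐᵃʲ Y}`, the map
`Y ↦ (Yᵢʲ)_{i ≤ d, j < n}` is an order reflection into `(P_f(ℕ^(d-1)))^(dn)`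
with the product of majoring orders. -/
theorem stmt13 (e : ℕ) (he : 1 ≤ e) (n : ℕ) (X : Finset (Fin (e + 1) → ℕ))
    (hX : ∀ x ∈ X, ∀ i, x i ≤ n)
    (Y Z : Finset (Fin (e + 1) → ℕ)) (hY : ¬ MajF X Y) (hZ : ¬ MajF X Z)
    (h : ∀ i : Fin (e + 1), ∀ j < n, MajF (proj Y i j) (proj Z i j)) :
    MajF Y Z := by
  intro y hy
  -- y has some coordinate < n, else X ⊑ᵐᵃʲ Y
  have hcoord : ∃ i, y i < n := by
    by_contra hc
    push_neg at hc
    exact hY fun x hx => ⟨y, hy, fun i => le_trans (hX x hx i) (hc i)⟩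
  obtain ⟨i, hi⟩ := hcoord
  have hmem : (y ∘ i.succAbove) ∈ proj Y i (y i) := by
    simp only [proj, Finset.mem_image, Finset.mem_filter]
    exact ⟨y, ⟨hy, rfl⟩, rfl⟩
  obtain ⟨z', hz', hle⟩ := h i (y i) hi _ hmem
  simp only [proj, Finset.mem_image, Finset.mem_filter] at hz'
  obtain ⟨z, ⟨hzZ, hzi⟩, rfl⟩ := hz'
  refine ⟨z, hzZ, fun k => ?_⟩
  rcases eq_or_ne k i with rfl | hk
  · exact hzi.ge
  · obtain ⟨m, rfl⟩ := Fin.exists_succAbove_eq hk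
    exact hle m
end
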